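/- Let τ > 0, n ≥ 1, M ∈ ℕ with M ≥ 1, δ = τ/M, s_i = i·δ, and h_j = δ^{−1/2}·𝟙_{(s_{j−1}, s_j]} for j = 1,…,M (an orthonormal family in L²([0,τ])). For a ∈ ℕ^M with |a| = n let \widetilde{h}_a = (√(n!)/√(a!))·Sym(h_1^{⊗a_1} ⊗ ⋯ ⊗ h_M^{⊗a_M}). Then for every symmetric g ∈ L²([0,τ]ⁿ), the orthogonal projection Σ_{a ∈ ℕ^M, |a| = n} ⟨g, \widetilde{h}_a⟩_{L²([0,τ]ⁿ)} · \widetilde{h}_a equals, almost everywhere on [0,τ]ⁿ, the step function whose value on each grid cell ∏_{k=1}^n (s_{i_k−1}, s_{i_k}] is the average of g over that cell. -/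

import Mathlib

open MeasureTheory

/-- The normalized indicator `h_j = δ^{-1/2}·𝟙_{(jδ, (j+1)δ]}` (0-based index `j`,
corresponding to the paper's `h_{j+1} = δ^{-1/2}·𝟙_{(s_j, s_{j+1}]}`). -/
noncomputable def indicBasis (δ : ℝ) (j : ℕ) (t : ℝ) : ℝ :=
  if t ∈ Set.Ioc ((j : ℝ) * δ) (((j : ℝ) + 1) * δ) then (Real.sqrt δ)⁻¹ else 0

/-- A listing of the multi-index `a ∈ ℕ^M`: the index `j` repeated `a j` times. -/
def listing (M : ℕ) (a : Fin M → ℕ) : List ℕ :=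
  (List.finRange M).flatMap fun j => List.replicate (a j) (j : ℕ)

/-- The factorial `a! = ∏_j a_j!` of a multi-index `a ∈ ℕ^M`. -/
def mFact {M : ℕ} (a : Fin M → ℕ) : ℕ := ∏ j, (a j).factorial

/-- The tensor product `h_1^{⊗ a_1} ⊗ ⋯ ⊗ h_M^{⊗ a_M}` of the normalized indicators,
as a function on `ℝⁿ`. -/
noncomputable def tensorFun (δ : ℝ) (M n : ℕ) (a : Fin M → ℕ) (u : Fin n → ℝ) : ℝ :=
  ∏ k : Fin n, indicBasis δ ((listing M a).getD k 0) (u k)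

/-- The symmetrization `(Sym f)(u) = (1/n!) Σ_{σ ∈ S_n} f(u_{σ(1)}, …, u_{σ(n)})`. -/
noncomputable def symFun (n : ℕ) (f : (Fin n → ℝ) → ℝ) (u : Fin n → ℝ) : ℝ :=
  ((n.factorial : ℝ))⁻¹ * ∑ σ : Equiv.Perm (Fin n), f fun k => u (σ k)

/-- The normalized symmetrized tensor `h̃_a = (√(n!)/√(a!))·Sym(h_1^{⊗a_1}⊗⋯⊗h_M^{⊗a_M})`
built from the normalized indicator basis of mesh `δ`. -/
noncomputable def hTilde (δ : ℝ) (M n : ℕ) (a : Fin M → ℕ) (u : Fin n → ℝ) : ℝ :=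
  (Real.sqrt n.factorial / Real.sqrt (mFact a)) * symFun n (tensorFun δ M n a) u

/-- The step function of cell averages with respect to the uniform grid of mesh `δ`:
`cellAvg n δ g u` is the average of `g` over the half-open grid cell
`∏_k (δ·(⌈u_k/δ⌉−1), δ·⌈u_k/δ⌉]` containing `u`. -/
noncomputable def cellAvg (n : ℕ) (δ : ℝ) (g : (Fin n → ℝ) → ℝ) (u : Fin n → ℝ) : ℝ :=
  (δ ^ n)⁻¹ *
    ∫ r in Set.univ.pi fun k =>
        Set.Ioc (δ * ((⌈u k / δ⌉ : ℝ) - 1)) (δ * (⌈u k / δ⌉ : ℝ)), g r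

/-! At a point `u` of `(0, τ]ⁿ` whose grid cell has multi-index `i`, `Sym(h^{⊗a})(u)` is
`δ^{-n/2}/n!` times the number of permutations `σ` with `i ∘ σ = listing(a)`. There are `a!` of
them when `a` is the occupation vector of `i` and none otherwise, so exactly one term of the sum
survives. For that `a`, symmetry of `g` gives `⟨g, Sym(h^{⊗a})⟩ = ⟨g, h^{⊗a}⟩ = δ^{-n/2} ∫_cell g`,
and the factors `n!/a!`, `1/n!`, `a!` and `δ^{-n}` combine to the cell average. -/

section PermComp

variable {α β : Type*} [Fintype α]

theorem exists_perm_comp_eq_iff [DecidableEq β] (f g : α → β) :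
    (∃ σ : Equiv.Perm α, f ∘ σ = g) ↔
      ∀ b, Fintype.card {x // f x = b} = Fintype.card {x // g x = b} := by
  constructor
  · rintro ⟨σ, rfl⟩ b
    exact Fintype.card_congr (Equiv.subtypeEquiv σ fun _ => Iff.rfl).symm
  · intro h
    exact ⟨Equiv.ofFiberEquiv fun b => (Fintype.equivOfCardEq (h b)).symm,
      funext (Equiv.ofFiberEquiv_map _)⟩

theorem card_perm_comp_eq_of_comp_eq [DecidableEq α] [DecidableEq β] {f g : α → β}
    {σ₀ : Equiv.Perm α} (h : f ∘ σ₀ = g) :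
    Fintype.card {σ : Equiv.Perm α // f ∘ σ = g} =
      Fintype.card {σ : Equiv.Perm α // f ∘ σ = f} := by
  subst h
  refine Fintype.card_congr (Equiv.subtypeEquiv (Equiv.mulRight σ₀⁻¹) fun σ => ?_)
  constructor <;> intro h <;> funext x
  · simpa using congrFun h (σ₀⁻¹ x)
  · simpa using congrFun h (σ₀ x)

def occupation (M : ℕ) (f : α → ℕ) : Fin M → ℕ := fun j => Fintype.card {x // f x = j}

theorem occupation_mem_antidiagonalTuple {M : ℕ} {f : α → ℕ} (hf : ∀ x, f x < M) :
    occupation M f ∈ Finset.Nat.antidiagonalTuple M (Fintype.card α) := by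
  let f' : α → Fin M := fun x => ⟨f x, hf x⟩
  rw [Finset.Nat.mem_antidiagonalTuple, ← Fintype.card_congr (Equiv.sigmaFiberEquiv f'),
    Fintype.card_sigma]
  exact Finset.sum_congr rfl fun j _ =>
    Fintype.card_congr (Equiv.subtypeEquivRight fun x => by simp [f', Fin.ext_iff])

theorem card_perm_comp_self_eq_mFact [DecidableEq α] {M : ℕ} {f : α → ℕ} (hf : ∀ x, f x < M) :
    Fintype.card {σ : Equiv.Perm α // f ∘ σ = f} = mFact (occupation M f) := by
  let f' : α → Fin M := fun x => ⟨f x, hf x⟩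
  have hfib (j : Fin M) : Fintype.card {x // f' x = j} = occupation M f j :=
    Fintype.card_congr (Equiv.subtypeEquivRight fun x => by simp [f', Fin.ext_iff])
  rw [mFact, ← Finset.prod_congr rfl fun j _ => congrArg Nat.factorial (hfib j),
    ← DomMulAct.stabilizer_card f']
  exact Fintype.card_congr (Equiv.subtypeEquivRight fun σ => by
    simp [f', funext_iff, Fin.ext_iff])

theorem occupation_eq_occupation_iff {M : ℕ} {f g : α → ℕ} (hf : ∀ x, f x < M)
    (hg : ∀ x, g x < M) :
    occupation M f = occupation M g ↔
      ∀ b, Fintype.card {x // f x = b} = Fintype.card {x // g x = b} := by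
  refine ⟨fun h b => ?_, fun h => funext fun j => h j⟩
  by_cases hb : b < M
  · exact congrFun h ⟨b, hb⟩
  · have hempty (h : α → ℕ) (hh : ∀ x, h x < M) : Fintype.card {x // h x = b} = 0 :=
      Fintype.card_eq_zero_iff.mpr ⟨fun x => hb (x.2 ▸ hh x)⟩
    rw [hempty f hf, hempty g hg]

end PermComp

section Listing

variable {M n : ℕ}

theorem lt_of_mem_listing {a : Fin M → ℕ} {x : ℕ} (hx : x ∈ listing M a) : x < M := by
  simp only [listing, List.mem_flatMap, List.mem_replicate] at hx
  obtain ⟨j, -, -, rfl⟩ := hx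
  exact j.2

theorem count_listing (a : Fin M → ℕ) (j : Fin M) : (listing M a).count (j : ℕ) = a j := by
  simp [listing, List.count_flatMap, ← List.ofFn_eq_map, List.sum_ofFn, List.count_replicate,
    Fin.val_inj]

theorem length_listing (a : Fin M → ℕ) : (listing M a).length = ∑ j, a j := by
  simp [listing, List.length_flatMap, ← List.ofFn_eq_map, List.sum_ofFn]

theorem card_getD_eq_count (l : List ℕ) (j : ℕ) :
    Fintype.card {k : Fin l.length // l.getD k 0 = j} = l.count j := by
  have hl : List.ofFn (fun k : Fin l.length => l.getD k 0) = l :=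
    List.ext_getElem (by simp) fun i _ h => by simp
  rw [Fintype.card_subtype, ← Multiset.coe_count]
  conv_rhs => rw [← hl, ← Fin.univ_val_map, Multiset.count_map]
  rw [Finset.card_def, Finset.filter_val]
  congr 1
  exact Multiset.filter_congr fun _ _ => eq_comm

def listingIndex (M n : ℕ) (a : Fin M → ℕ) (k : Fin n) : ℕ := (listing M a).getD k 0

theorem listingIndex_lt {a : Fin M → ℕ} (ha : a ∈ Finset.Nat.antidiagonalTuple M n)
    (k : Fin n) : listingIndex M n a k < M := by
  have hk : (k : ℕ) < (listing M a).length := by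
    rw [length_listing, Finset.Nat.mem_antidiagonalTuple.mp ha]
    exact k.2
  rw [listingIndex, List.getD_eq_getElem _ _ hk]
  exact lt_of_mem_listing (List.getElem_mem hk)

theorem occupation_listingIndex {a : Fin M → ℕ} (ha : a ∈ Finset.Nat.antidiagonalTuple M n) :
    occupation M (listingIndex M n a) = a := by
  obtain rfl : (listing M a).length = n := by
    rw [length_listing, Finset.Nat.mem_antidiagonalTuple.mp ha]
  funext j
  exact (card_getD_eq_count _ _).trans (count_listing a j)

theorem exists_perm_comp_eq_listingIndex_iff {f : Fin n → ℕ} (hf : ∀ k, f k < M)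
    {a : Fin M → ℕ} (ha : a ∈ Finset.Nat.antidiagonalTuple M n) :
    (∃ σ : Equiv.Perm (Fin n), f ∘ σ = listingIndex M n a) ↔ occupation M f = a := by
  rw [exists_perm_comp_eq_iff, ← occupation_eq_occupation_iff hf (listingIndex_lt ha),
    occupation_listingIndex ha]

theorem mFact_pos (a : Fin M → ℕ) : 0 < mFact a :=
  Finset.prod_pos fun j _ => Nat.factorial_pos (a j)

theorem card_perm_comp_eq_listingIndex {f : Fin n → ℕ} (hf : ∀ k, f k < M)
    {a : Fin M → ℕ} (ha : a ∈ Finset.Nat.antidiagonalTuple M n) :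
    Fintype.card {σ : Equiv.Perm (Fin n) // f ∘ σ = listingIndex M n a} =
      if occupation M f = a then mFact a else 0 := by
  split_ifs with h
  · obtain ⟨σ₀, hσ₀⟩ := (exists_perm_comp_eq_listingIndex_iff hf ha).mpr h
    rw [card_perm_comp_eq_of_comp_eq hσ₀, card_perm_comp_self_eq_mFact hf, h]
  · exact Fintype.card_eq_zero_iff.mpr
      ⟨fun σ => h ((exists_perm_comp_eq_listingIndex_iff hf ha).mp ⟨σ, σ.2⟩)⟩

end Listing

section Grid

variable {ι : Type*} {δ : ℝ}

def gridCell (δ : ℝ) (i : ι → ℕ) : Set (ι → ℝ) :=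
  Set.univ.pi fun k => Set.Ioc (i k * δ) ((i k + 1) * δ)

/-- Meaningful for points with positive coordinates only: for `t ≤ 0` the truncated subtraction
`⌈t / δ⌉₊ - 1` returns `0`. -/
noncomputable def cellIndex (δ : ℝ) (u : ι → ℝ) : ι → ℕ := fun k => ⌈u k / δ⌉₊ - 1

theorem measurableSet_gridCell [Countable ι] (δ : ℝ) (i : ι → ℕ) :
    MeasurableSet (gridCell δ i) :=
  MeasurableSet.univ_pi fun _ => measurableSet_Ioc

theorem ae_restrict_univ_pi_Icc_mem_Ioc [Fintype ι] (a b : ℝ) :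
    ∀ᵐ u ∂volume.restrict (Set.univ.pi fun _ : ι => Set.Icc a b),
      u ∈ Set.univ.pi fun _ => Set.Ioc a b := by
  have hIoc : (Set.univ.pi fun _ : ι => Set.Ioc a b) =ᵐ[volume]
      Set.univ.pi fun _ => Set.Icc a b := Measure.pi_Ioc_ae_eq_pi_Icc
  rw [← Measure.restrict_congr_set hIoc]
  exact ae_restrict_mem (MeasurableSet.univ_pi fun _ => measurableSet_Ioc)

theorem mem_Ioc_iff_ceil_sub_one (hδ : 0 < δ) {t : ℝ} (ht : 0 < t) (j : ℕ) :
    t ∈ Set.Ioc (j * δ) ((j + 1) * δ) ↔ ⌈t / δ⌉₊ - 1 = j := by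
  have hpos : 0 < ⌈t / δ⌉₊ := Nat.ceil_pos.mpr (div_pos ht hδ)
  rw [show ⌈t / δ⌉₊ - 1 = j ↔ ⌈t / δ⌉₊ = j + 1 by omega, Nat.ceil_eq_iff (Nat.succ_ne_zero j),
    Set.mem_Ioc, lt_div_iff₀ hδ, div_le_iff₀ hδ]
  push_cast
  simp

theorem mem_gridCell_iff (hδ : 0 < δ) {u : ι → ℝ} (hu : ∀ k, 0 < u k) (i : ι → ℕ) :
    u ∈ gridCell δ i ↔ cellIndex δ u = i := by
  simp only [gridCell, Set.mem_univ_pi, funext_iff, cellIndex,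
    mem_Ioc_iff_ceil_sub_one hδ (hu _)]

theorem cellIndex_lt (hδ : 0 < δ) {M : ℕ} {u : ι → ℝ}
    (hu : u ∈ Set.univ.pi fun _ => Set.Ioc 0 (M * δ)) (k : ι) : cellIndex δ u k < M := by
  obtain ⟨hpos, hle⟩ := hu k (Set.mem_univ k)
  have h1 : 0 < ⌈u k / δ⌉₊ := Nat.ceil_pos.mpr (div_pos hpos hδ)
  have h2 : ⌈u k / δ⌉₊ ≤ M := Nat.ceil_le.mpr ((div_le_iff₀ hδ).mpr hle)
  simp only [cellIndex]
  omega

theorem gridCell_subset_pi_Ioc (hδ : 0 ≤ δ) {M : ℕ} {i : ι → ℕ} (hi : ∀ k, i k < M) :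
    gridCell δ i ⊆ Set.univ.pi fun _ => Set.Ioc 0 (M * δ) := by
  refine Set.pi_mono fun k _ => Set.Ioc_subset_Ioc (by positivity) ?_
  gcongr
  exact_mod_cast hi k

theorem prod_indicBasis [Fintype ι] (i : ι → ℕ) (u : ι → ℝ) :
    ∏ k, indicBasis δ (i k) (u k) =
      (gridCell δ i).indicator (fun _ => (Real.sqrt δ)⁻¹ ^ Fintype.card ι) u := by
  by_cases hu : u ∈ gridCell δ i
  · rw [Set.indicator_of_mem hu, ← Finset.card_univ, ← Finset.prod_const]
    exact Finset.prod_congr rfl fun k _ => if_pos (hu k (Set.mem_univ k))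
  · rw [Set.indicator_of_notMem hu]
    obtain ⟨k, hk⟩ : ∃ k, u k ∉ Set.Ioc (i k * δ) ((i k + 1) * δ) := by
      simpa [gridCell] using hu
    exact Finset.prod_eq_zero (Finset.mem_univ k) (if_neg hk)

end Grid

theorem tensorFun_eq_indicator (δ : ℝ) (M n : ℕ) (a : Fin M → ℕ) :
    tensorFun δ M n a =
      (gridCell δ (listingIndex M n a)).indicator fun _ => (Real.sqrt δ)⁻¹ ^ n := by
  funext u
  rw [tensorFun, prod_indicBasis, Fintype.card_fin]
  rfl

theorem cellAvg_eq_setIntegral_gridCell {n : ℕ} {δ : ℝ} (hδ : 0 < δ) (g : (Fin n → ℝ) → ℝ)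
    {u : Fin n → ℝ} (hu : ∀ k, 0 < u k) :
    cellAvg n δ g u = (δ ^ n)⁻¹ * ∫ v in gridCell δ (cellIndex δ u), g v := by
  have hcell (k : Fin n) : ((cellIndex δ u k : ℕ) : ℝ) = ⌈u k / δ⌉ - 1 := by
    have hpos : 1 ≤ ⌈u k / δ⌉₊ := Nat.ceil_pos.mpr (div_pos (hu k) hδ)
    rw [cellIndex, Nat.cast_sub hpos, natCast_ceil_eq_intCast_ceil (div_pos (hu k) hδ).le,
      Nat.cast_one]
  have hset : gridCell δ (cellIndex δ u) =
      Set.univ.pi fun k => Set.Ioc (δ * ((⌈u k / δ⌉ : ℝ) - 1)) (δ * ⌈u k / δ⌉) := by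
    refine congrArg Set.univ.pi (funext fun k => ?_)
    rw [hcell]
    congr 1 <;> ring
  rw [hset, cellAvg]

section Symmetrization

variable {ι : Type*} [Fintype ι]

def AESymmetric (μ : Measure (ι → ℝ)) (g : (ι → ℝ) → ℝ) : Prop :=
  ∀ σ : Equiv.Perm ι, (fun u => g fun k => u (σ k)) =ᵐ[μ] g

theorem setIntegral_univ_pi_comp_perm {E : Type*} [NormedAddCommGroup E] [NormedSpace ℝ E]
    (σ : Equiv.Perm ι) (t : ι → Set ℝ) (F : (ι → ℝ) → E) :
    ∫ v in Set.univ.pi (fun k => t (σ.symm k)), F (fun k => v (σ k)) =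
      ∫ v in Set.univ.pi t, F v := by
  let e : (ι → ℝ) ≃ᵐ (ι → ℝ) := MeasurableEquiv.arrowCongr' σ.symm (MeasurableEquiv.refl ℝ)
  have he : MeasurePreserving e :=
    volume_preserving_arrowCongr' _ _ (MeasurePreserving.id volume)
  have hpre : e ⁻¹' Set.univ.pi t = Set.univ.pi fun k => t (σ.symm k) := by
    ext v
    simp only [Set.mem_preimage, Set.mem_univ_pi, show e v = fun k => v (σ k) from rfl]
    exact ⟨fun h k => by simpa using h (σ.symm k), fun h k => by simpa using h (σ k)⟩
  rw [← hpre]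
  exact he.setIntegral_preimage_emb e.measurableEmbedding F _

variable {s : Set ℝ} {g : (ι → ℝ) → ℝ}

theorem setIntegral_univ_pi_comp_perm_of_aeSymmetric
    (hg : AESymmetric (volume.restrict (Set.univ.pi fun _ => s)) g) (σ : Equiv.Perm ι)
    {t : ι → Set ℝ} (ht : (Set.univ.pi fun k => t (σ k)) ⊆ Set.univ.pi fun _ => s) :
    ∫ v in Set.univ.pi (fun k => t (σ k)), g v = ∫ v in Set.univ.pi t, g v := by
  rw [← setIntegral_univ_pi_comp_perm σ⁻¹ t g]
  refine integral_congr_ae ?_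
  filter_upwards [ae_restrict_of_ae_restrict_of_subset ht (hg σ⁻¹)] with v hv
  simpa using hv.symm

theorem setIntegral_mul_comp_perm_of_aeSymmetric
    (hg : AESymmetric (volume.restrict (Set.univ.pi fun _ => s)) g)
    (F : (ι → ℝ) → ℝ) (σ : Equiv.Perm ι) :
    ∫ v in Set.univ.pi (fun _ => s), g v * F (fun k => v (σ k)) =
      ∫ v in Set.univ.pi (fun _ => s), g v * F v := by
  have h := setIntegral_univ_pi_comp_perm σ (fun _ => s)
    fun w => g (fun k => w (σ.symm k)) * F w
  simp only [Equiv.apply_symm_apply] at h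
  rw [h]
  refine integral_congr_ae ?_
  filter_upwards [hg σ⁻¹] with w hw
  rw [← hw]
  rfl

end Symmetrization

section Projection

variable {n : ℕ}

open Classical in
theorem symFun_indicator_const (S : Set (Fin n → ℝ)) (c : ℝ) (u : Fin n → ℝ) :
    symFun n (S.indicator fun _ => c) u =
      (n.factorial : ℝ)⁻¹ *
        Fintype.card {σ : Equiv.Perm (Fin n) // (fun k => u (σ k)) ∈ S} * c := by
  simp only [symFun, Set.indicator_apply]
  rw [Finset.sum_ite, Finset.sum_const_zero, add_zero, Finset.sum_const, nsmul_eq_mul,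
    Fintype.card_subtype, mul_assoc]

theorem setIntegral_mul_symFun_of_aeSymmetric {s : Set ℝ} {g : (Fin n → ℝ) → ℝ}
    (hgi : IntegrableOn g (Set.univ.pi fun _ => s))
    (hg : AESymmetric (volume.restrict (Set.univ.pi fun _ => s)) g)
    {F : (Fin n → ℝ) → ℝ} (hFm : Measurable F) {C : ℝ} (hFC : ∀ v, ‖F v‖ ≤ C) :
    ∫ v in Set.univ.pi (fun _ => s), g v * symFun n F v =
      ∫ v in Set.univ.pi (fun _ => s), g v * F v := by
  have hint (σ : Equiv.Perm (Fin n)) :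
      IntegrableOn (fun v => g v * F fun k => v (σ k)) (Set.univ.pi fun _ => s) :=
    hgi.mul_bdd
      (hFm.comp (measurable_pi_lambda _ fun k => measurable_pi_apply (σ k))).aestronglyMeasurable
      (Filter.Eventually.of_forall fun v => hFC _)
  calc ∫ v in Set.univ.pi (fun _ => s), g v * symFun n F v
      = (n.factorial : ℝ)⁻¹ * ∑ σ : Equiv.Perm (Fin n),
          ∫ v in Set.univ.pi (fun _ => s), g v * F fun k => v (σ k) := by
        rw [← integral_finsetSum _ fun σ _ => hint σ, ← integral_const_mul]
        simp only [symFun, Finset.mul_sum]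
        congr 1
        ext v
        exact Finset.sum_congr rfl fun _ _ => mul_left_comm _ _ _
    _ = ∫ v in Set.univ.pi (fun _ => s), g v * F v := by
        simp only [setIntegral_mul_comp_perm_of_aeSymmetric hg, Finset.sum_const,
          Finset.card_univ, Fintype.card_perm, Fintype.card_fin, nsmul_eq_mul]
        field_simp

theorem hTilde_apply_of_pos {δ : ℝ} (hδ : 0 < δ) (M : ℕ) (a : Fin M → ℕ) {u : Fin n → ℝ}
    (hu : ∀ k, 0 < u k) :
    hTilde δ M n a u = Real.sqrt n.factorial / Real.sqrt (mFact a) *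
      ((n.factorial : ℝ)⁻¹ *
        Fintype.card {σ : Equiv.Perm (Fin n) // cellIndex δ u ∘ σ = listingIndex M n a} *
          (Real.sqrt δ)⁻¹ ^ n) := by
  classical
  rw [hTilde, tensorFun_eq_indicator, symFun_indicator_const]
  congr 4
  exact Fintype.card_congr
    (Equiv.subtypeEquivRight fun σ => mem_gridCell_iff hδ (fun k => hu (σ k)) _)

theorem setIntegral_mul_hTilde {s : Set ℝ} {g : (Fin n → ℝ) → ℝ}
    (hgi : IntegrableOn g (Set.univ.pi fun _ => s))
    (hg : AESymmetric (volume.restrict (Set.univ.pi fun _ => s)) g)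
    {δ : ℝ} {M : ℕ} {a : Fin M → ℕ}
    (hcell : gridCell δ (listingIndex M n a) ⊆ Set.univ.pi fun _ => s) :
    ∫ v in Set.univ.pi (fun _ => s), g v * hTilde δ M n a v =
      Real.sqrt n.factorial / Real.sqrt (mFact a) *
        ((Real.sqrt δ)⁻¹ ^ n * ∫ v in gridCell δ (listingIndex M n a), g v) := by
  set S := gridCell δ (listingIndex M n a)
  have hS : MeasurableSet S := measurableSet_gridCell δ _
  have hind (v : Fin n → ℝ) : g v * S.indicator (fun _ => (Real.sqrt δ)⁻¹ ^ n) v =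
      (Real.sqrt δ)⁻¹ ^ n * S.indicator g v := by
    by_cases hv : v ∈ S <;> simp [hv, mul_comm]
  simp only [hTilde, mul_left_comm (g _), integral_const_mul]
  rw [tensorFun_eq_indicator, setIntegral_mul_symFun_of_aeSymmetric hgi hg
    (measurable_const.indicator hS) (norm_indicator_le_norm_self _)]
  simp only [hind, integral_const_mul, setIntegral_indicator hS, Set.inter_eq_right.mpr hcell]

theorem hTilde_coefficients_mul {δ : ℝ} (hδ : 0 < δ) (n : ℕ) {M : ℕ} (a : Fin M → ℕ) :
    Real.sqrt n.factorial / Real.sqrt (mFact a) * (Real.sqrt δ)⁻¹ ^ n *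
        (Real.sqrt n.factorial / Real.sqrt (mFact a) *
          ((n.factorial : ℝ)⁻¹ * mFact a * (Real.sqrt δ)⁻¹ ^ n)) = (δ ^ n)⁻¹ := by
  have hA : (Real.sqrt n.factorial / Real.sqrt (mFact a)) ^ 2 = (n.factorial : ℝ) / mFact a := by
    rw [div_pow, Real.sq_sqrt (by positivity), Real.sq_sqrt (by positivity)]
  have hc : ((Real.sqrt δ)⁻¹ ^ n) ^ 2 = (δ ^ n)⁻¹ := by
    rw [← pow_mul, mul_comm, pow_mul, inv_pow, Real.sq_sqrt hδ.le, inv_pow]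
  have hfact : (mFact a : ℝ) ≠ 0 := Nat.cast_ne_zero.mpr (mFact_pos a).ne'
  calc _ = (Real.sqrt n.factorial / Real.sqrt (mFact a)) ^ 2 * ((Real.sqrt δ)⁻¹ ^ n) ^ 2 *
        ((n.factorial : ℝ)⁻¹ * mFact a) := by ring
    _ = _ := by
      rw [hA, hc]
      field_simp

theorem setIntegral_mul_hTilde_mul_hTilde {δ : ℝ} (hδ : 0 < δ) {M : ℕ} {s : Set ℝ}
    (hs : Set.Ioc 0 (M * δ) ⊆ s) {g : (Fin n → ℝ) → ℝ}
    (hgi : IntegrableOn g (Set.univ.pi fun _ => s))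
    (hg : AESymmetric (volume.restrict (Set.univ.pi fun _ => s)) g)
    {a : Fin M → ℕ} (ha : a ∈ Finset.Nat.antidiagonalTuple M n) {u : Fin n → ℝ}
    (hu : u ∈ Set.univ.pi fun _ => Set.Ioc 0 (M * δ)) :
    (∫ v in Set.univ.pi (fun _ => s), g v * hTilde δ M n a v) * hTilde δ M n a u =
      if occupation M (cellIndex δ u) = a then
        (δ ^ n)⁻¹ * ∫ v in gridCell δ (cellIndex δ u), g v
      else 0 := by
  have hlt := cellIndex_lt hδ hu
  have hsub {i : Fin n → ℕ} (hi : ∀ k, i k < M) : gridCell δ i ⊆ Set.univ.pi fun _ => s :=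
    (gridCell_subset_pi_Ioc hδ.le hi).trans (Set.pi_mono fun _ _ => hs)
  rw [setIntegral_mul_hTilde hgi hg (hsub (listingIndex_lt ha)),
    hTilde_apply_of_pos hδ M a fun k => (hu k (Set.mem_univ k)).1, card_perm_comp_eq_listingIndex hlt ha]
  split_ifs with h
  · obtain ⟨σ, hσ⟩ := (exists_perm_comp_eq_listingIndex_iff hlt ha).mpr h
    have hint : ∫ v in gridCell δ (cellIndex δ u ∘ σ), g v =
        ∫ v in gridCell δ (cellIndex δ u), g v :=
      setIntegral_univ_pi_comp_perm_of_aeSymmetric hg σ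
        (t := fun k => Set.Ioc (cellIndex δ u k * δ) ((cellIndex δ u k + 1) * δ))
        (hsub fun k => hlt (σ k))
    rw [← hσ, hint, ← hTilde_coefficients_mul hδ n a]
    ring
  · simp

end Projection

theorem projection_eq_cell_average_general (τ : ℝ) (hτ : 0 < τ) (n : ℕ)
    (M : ℕ) (hM : 1 ≤ M)
    (g : (Fin n → ℝ) → ℝ)
    (hgL2 : MemLp g 2
      (volume.restrict (Set.univ.pi fun _ : Fin n => Set.Icc (0 : ℝ) τ)))
    (hgsym : ∀ σ : Equiv.Perm (Fin n), (fun u => g fun k => u (σ k))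
      =ᵐ[volume.restrict (Set.univ.pi fun _ : Fin n => Set.Icc (0 : ℝ) τ)] g) :
    (fun u => ∑ a ∈ Finset.Nat.antidiagonalTuple M n,
        (∫ v in Set.univ.pi fun _ : Fin n => Set.Icc (0 : ℝ) τ,
            g v * hTilde (τ / M) M n a v) * hTilde (τ / M) M n a u)
      =ᵐ[volume.restrict (Set.univ.pi fun _ : Fin n => Set.Icc (0 : ℝ) τ)]
        cellAvg n (τ / M) g := by
  have hδ : 0 < τ / M := div_pos hτ (by exact_mod_cast hM)
  have hτM : (M : ℝ) * (τ / M) = τ := by field_simp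
  have hs : Set.Ioc 0 (M * (τ / M)) ⊆ Set.Icc 0 τ := by
    rw [hτM]
    exact Set.Ioc_subset_Icc_self
  have : IsFiniteMeasure (volume.restrict (Set.univ.pi fun _ : Fin n => Set.Icc (0 : ℝ) τ)) :=
    isFiniteMeasure_restrict.mpr (isCompact_univ_pi fun _ => isCompact_Icc).measure_lt_top.ne
  filter_upwards [ae_restrict_univ_pi_Icc_mem_Ioc 0 τ] with u hu
  rw [← hτM] at hu
  have hocc : occupation M (cellIndex (τ / M) u) ∈ Finset.Nat.antidiagonalTuple M n := by
    simpa using occupation_mem_antidiagonalTuple (cellIndex_lt hδ hu)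
  rw [Finset.sum_congr rfl fun a ha => setIntegral_mul_hTilde_mul_hTilde hδ hs
      (hgL2.integrable one_le_two) hgsym ha hu,
    Finset.sum_ite_eq, if_pos hocc, cellAvg_eq_setIntegral_gridCell hδ g fun k => (hu k trivial).1]

/-- From the proof of Lemma 4.4 of the paper: for the normalized-indicator basis of mesh
`δ = τ/M`, the orthogonal projection `Σ_{a ∈ ℕ^M, |a| = n} ⟨g, h̃_a⟩·h̃_a` of a symmetric
`g ∈ L²([0,τ]ⁿ)` coincides a.e. on `[0,τ]ⁿ` with the step function whose value on each
grid cell is the average of `g` over that cell. -/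
theorem projection_eq_cell_average (τ : ℝ) (hτ : 0 < τ) (n : ℕ) (hn : 1 ≤ n)
    (M : ℕ) (hM : 1 ≤ M)
    (g : (Fin n → ℝ) → ℝ)
    (hgL2 : MemLp g 2
      (volume.restrict (Set.univ.pi fun _ : Fin n => Set.Icc (0 : ℝ) τ)))
    (hgsym : ∀ σ : Equiv.Perm (Fin n), (fun u => g fun k => u (σ k))
      =ᵐ[volume.restrict (Set.univ.pi fun _ : Fin n => Set.Icc (0 : ℝ) τ)] g) :
    (fun u => ∑ a ∈ Finset.Nat.antidiagonalTuple M n,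
        (∫ v in Set.univ.pi fun _ : Fin n => Set.Icc (0 : ℝ) τ,
            g v * hTilde (τ / M) M n a v) * hTilde (τ / M) M n a u)
      =ᵐ[volume.restrict (Set.univ.pi fun _ : Fin n => Set.Icc (0 : ℝ) τ)]
        cellAvg n (τ / M) g :=
  projection_eq_cell_average_general τ hτ n M hM g hgL2 hgsym
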